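/- arXiv:1305.3082 — 3 statements merged into one kernel-verified Lean document; each statement's English description precedes it below -/
import Mathlib

section
/- A neighborhood pattern of finite size at least 2 is not decomposable if and only if it is a path pattern. -/
/-- A labeled graph over vertex-label alphabet `SV` and edge-label alphabet `SE`:
a vertex set, a set of vertex labels, and a set of labeled edges with no loops. -/
structure LabeledGraph (V SV SE : Type*) where
  verts : Set V
  labels : Set (V × SV)
  edges : Set (V × V × SE)
  labels_sub : ∀ ⦃p : V × SV⦄, p ∈ labels → p.1 ∈ verts
  edges_sub : ∀ ⦃q : V × V × SE⦄, q ∈ edges → q.1 ∈ verts ∧ q.2.1 ∈ verts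
  no_loops : ∀ ⦃q : V × V × SE⦄, q ∈ edges → q.1 ≠ q.2.1

/-- An element of a labeled graph: a vertex label or a labeled edge. -/
abbrev GraphElement (V SV SE : Type*) := (V × SV) ⊕ (V × V × SE)

namespace LabeledGraph

variable {V SV SE : Type*}

/-- Adjacency, ignoring edge directions. -/
def Adj (G : LabeledGraph V SV SE) (x y : V) : Prop :=
  ∃ l, (x, y, l) ∈ G.edges ∨ (y, x, l) ∈ G.edges

/-- The size of a labeled graph: number of vertex labels plus number of labeled edges. -/
noncomputable def size (G : LabeledGraph V SV SE) : ℕ := G.labels.ncard + G.edges.ncard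

/-- Membership of an element in a labeled graph. -/
def HasElement (G : LabeledGraph V SV SE) : GraphElement V SV SE → Prop
  | Sum.inl p => p ∈ G.labels
  | Sum.inr q => q ∈ G.edges

/-- A vertex is occupied (not isolated) w.r.t. given label and edge sets if it
carries some vertex label or is incident to some labeled edge. -/
def Occupied (labels : Set (V × SV)) (edges : Set (V × V × SE)) (x : V) : Prop :=
  (∃ l, (x, l) ∈ labels) ∨ (∃ u l, (x, u, l) ∈ edges ∨ (u, x, l) ∈ edges)

/-- The vertex labels remaining after deleting an element. -/
def delLabels (G : LabeledGraph V SV SE) : GraphElement V SV SE → Set (V × SV)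
  | Sum.inl p => G.labels \ {p}
  | Sum.inr _ => G.labels

/-- The labeled edges remaining after deleting an element. -/
def delEdges (G : LabeledGraph V SV SE) : GraphElement V SV SE → Set (V × V × SE)
  | Sum.inl _ => G.edges
  | Sum.inr q => G.edges \ {q}

lemma delLabels_subset (G : LabeledGraph V SV SE) (e : GraphElement V SV SE) :
    G.delLabels e ⊆ G.labels := by
  cases e with
  | inl p => exact Set.diff_subset
  | inr q => exact subset_rfl

lemma delEdges_subset (G : LabeledGraph V SV SE) (e : GraphElement V SV SE) :
    G.delEdges e ⊆ G.edges := by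
  cases e with
  | inl p => exact subset_rfl
  | inr q => exact Set.diff_subset

/-- Removing an element from a labeled graph: delete that vertex label or labeled
edge, and additionally delete any vertex thereby left isolated. -/
def removeElement (G : LabeledGraph V SV SE) (e : GraphElement V SV SE) :
    LabeledGraph V SV SE where
  verts := {x ∈ G.verts |
    Occupied (G.delLabels e) (G.delEdges e) x ∨ ¬ Occupied G.labels G.edges x}
  labels := G.delLabels e
  edges := G.delEdges e
  labels_sub := fun p hp =>
    ⟨G.labels_sub (G.delLabels_subset e hp), Or.inl (Or.inl ⟨p.2, hp⟩)⟩
  edges_sub := fun q hq =>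
    ⟨⟨(G.edges_sub (G.delEdges_subset e hq)).1,
        Or.inl (Or.inr ⟨q.2.1, q.2.2, Or.inl hq⟩)⟩,
      ⟨(G.edges_sub (G.delEdges_subset e hq)).2,
        Or.inl (Or.inr ⟨q.1, q.2.2, Or.inr hq⟩)⟩⟩
  no_loops := fun q hq => G.no_loops (G.delEdges_subset e hq)

/-- Connectivity of a (non-pivoted) labeled graph: every pair of its vertices is
joined by a path of edges, ignoring edge directions. -/
def ConnectedGraph (G : LabeledGraph V SV SE) : Prop :=
  ∀ x ∈ G.verts, ∀ y ∈ G.verts, Relation.ReflTransGen G.Adj x y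

/-- A leaf vertex: incident to exactly one labeled edge. -/
def IsLeafVertex (G : LabeledGraph V SV SE) (x : V) : Prop :=
  ∃! q : V × V × SE, q ∈ G.edges ∧ (q.1 = x ∨ q.2.1 = x)

/-- A cycle in the underlying undirected multigraph: a closed walk
`ws` using pairwise distinct labeled edges `es`. -/
def IsCycle (G : LabeledGraph V SV SE) (es : List (V × V × SE)) (ws : List V) : Prop :=
  es ≠ [] ∧ es.Nodup ∧
  ws.length = es.length + 1 ∧ ws.head? = ws.getLast? ∧
  ∀ i q, es[i]? = some q → q ∈ G.edges ∧
    ∃ u w, ws[i]? = some u ∧ ws[i+1]? = some w ∧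
      ((q.1 = u ∧ q.2.1 = w) ∨ (q.1 = w ∧ q.2.1 = u))

end LabeledGraph

/-- A pivoted graph: a labeled graph with a distinguished vertex, the pivot. -/
structure PivotedGraph (V SV SE : Type*) extends LabeledGraph V SV SE where
  pivot : V
  pivot_mem : pivot ∈ verts

/-- Pivoted subgraph isomorphism `P₁ ⊆_f P₂`: an injective map on vertices preserving
vertex labels and labeled edges and sending pivot to pivot. -/
def PSubIso {V₁ V₂ SV SE : Type*}
    (P₁ : PivotedGraph V₁ SV SE) (P₂ : PivotedGraph V₂ SV SE) : Prop :=
  ∃ f : V₁ → V₂,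
    Set.MapsTo f P₁.verts P₂.verts ∧
    Set.InjOn f P₁.verts ∧
    (∀ ⦃x : V₁⦄ ⦃l : SV⦄, (x, l) ∈ P₁.labels → (f x, l) ∈ P₂.labels) ∧
    (∀ ⦃x y : V₁⦄ ⦃l : SE⦄, (x, y, l) ∈ P₁.edges → (f x, f y, l) ∈ P₂.edges) ∧
    f P₁.pivot = P₂.pivot

/-- The match set `M_G(P)`: all vertices `v` of `G` such that `P ⊆_f ⟨G, v⟩`. -/
def matchSet {V V' SV SE : Type*} (G : LabeledGraph V SV SE)
    (P : PivotedGraph V' SV SE) : Set V :=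
  {x | ∃ hx : x ∈ G.verts, PSubIso P ⟨G, x, hx⟩}

namespace PivotedGraph

variable {V SV SE : Type*}

/-- A pivoted graph is connected if every vertex is joined to the pivot by a path
of edges, ignoring edge directions. (A neighborhood pattern is a connected
pivoted graph.) -/
def Connected (P : PivotedGraph V SV SE) : Prop :=
  ∀ x ∈ P.verts, Relation.ReflTransGen P.toLabeledGraph.Adj x P.pivot

/-- Removing the element `e` from `P` yields a connected pivoted graph (with the
same pivot). -/
def ConnectedAfterRemove (P : PivotedGraph V SV SE) (e : GraphElement V SV SE) : Prop :=
  P.pivot ∈ (P.toLabeledGraph.removeElement e).verts ∧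
  ∀ x ∈ (P.toLabeledGraph.removeElement e).verts,
    Relation.ReflTransGen (P.toLabeledGraph.removeElement e).Adj x P.pivot

/-- A neighborhood pattern is decomposable if it has two distinct elements such that
removing either one yields a connected pivoted graph. -/
def Decomposable (P : PivotedGraph V SV SE) : Prop :=
  ∃ e₁ e₂ : GraphElement V SV SE, e₁ ≠ e₂ ∧
    P.toLabeledGraph.HasElement e₁ ∧ P.toLabeledGraph.HasElement e₂ ∧
    P.ConnectedAfterRemove e₁ ∧ P.ConnectedAfterRemove e₂

/-- A path pattern: the edges, with directions ignored, form a simple path (given by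
the list of vertices `vs`) having the pivot as one endpoint, with at most one vertex
label, which (if present) is on the other endpoint of the path. -/
def IsPathPattern (P : PivotedGraph V SV SE) : Prop :=
  ∃ vs : List V,
    vs ≠ [] ∧ vs.Nodup ∧ vs.head? = some P.pivot ∧
    P.verts = {x | x ∈ vs} ∧
    (∀ q ∈ P.edges, ∃ i u w, vs[i]? = some u ∧ vs[i + 1]? = some w ∧
      ((q.1 = u ∧ q.2.1 = w) ∨ (q.1 = w ∧ q.2.1 = u))) ∧
    (∀ i u w, vs[i]? = some u → vs[i + 1]? = some w →
      ∃! q : V × V × SE, q ∈ P.edges ∧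
        ((q.1 = u ∧ q.2.1 = w) ∨ (q.1 = w ∧ q.2.1 = u))) ∧
    P.labels.Subsingleton ∧
    (∀ p ∈ P.labels, vs.getLast? = some p.1)

end PivotedGraph

/-- An injective match of a labeled graph pattern `P` in a labeled graph `G`:
an injective map from the vertices of `P` to those of `G` carrying vertex labels
to vertex labels and labeled edges to labeled edges. -/
def MatchOn {V V' SV SE : Type*} (P : LabeledGraph V' SV SE) (G : LabeledGraph V SV SE)
    (f : P.verts → V) : Prop :=
  (∀ x, f x ∈ G.verts) ∧ Function.Injective f ∧
  (∀ ⦃p : V' × SV⦄ (hp : p ∈ P.labels), (f ⟨p.1, P.labels_sub hp⟩, p.2) ∈ G.labels) ∧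
  (∀ ⦃q : V' × V' × SE⦄ (hq : q ∈ P.edges),
    (f ⟨q.1, (P.edges_sub hq).1⟩, f ⟨q.2.1, (P.edges_sub hq).2⟩, q.2.2) ∈ G.edges)

/-!
Every vertex label is removable, and so is every edge lying on a cycle; a cycle through one edge
contains a second one.  Hence a non-decomposable pattern has at most one label and all its edges
are bridges.  The free end of a maximal simple path starting at the pivot carries a removable
element: its label, or else its only edge.  If the pattern branched off such a path, a second
maximal path would end at the same removable element, which closes a cycle.  So the pattern is
the path.  Conversely, in a path pattern deleting any edge but the last cuts the vertices beyond
it off the pivot, and the last edge is removable only when there is no label.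
-/

namespace Relation.ReflTransGen

variable {α : Type*} {r : α → α → Prop} {a b : α}

theorem mem_of_closed {S : Set α} (h : ReflTransGen r a b) (ha : a ∈ S)
    (hS : ∀ x y, r x y → x ∈ S → y ∈ S) : b ∈ S := by
  induction h with
  | refl => exact ha
  | tail _ hbc ih => exact hS _ _ hbc ih

theorem exists_head_avoiding (h : ReflTransGen r a b) (hab : a ≠ b) :
    ∃ c, r a c ∧ ReflTransGen (fun x y => r x y ∧ x ≠ a ∧ y ≠ a) c b := by
  suffices ∀ y, ReflTransGen r a y → y = a ∨
      ∃ c, r a c ∧ ReflTransGen (fun x y => r x y ∧ x ≠ a ∧ y ≠ a) c y from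
    (this b h).resolve_left hab.symm
  intro y hy
  induction hy with
  | refl => exact Or.inl rfl
  | @tail y z _ hyz ih =>
    by_cases hz : z = a
    · exact Or.inl hz
    obtain rfl | ⟨c, hac, hcy⟩ := ih
    · exact Or.inr ⟨z, hyz, .refl⟩
    · by_cases hy : y = a
      · exact Or.inr ⟨z, hy ▸ hyz, .refl⟩
      · exact Or.inr ⟨c, hac, hcy.tail ⟨hyz, hy, hz⟩⟩

theorem avoiding_of_sole_neighbor [Std.Symm r] {w p : α} (hw : ∀ x, r x w → x = p)
    (h : ReflTransGen r a b) (ha : a ≠ w) (hb : b ≠ w) :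
    ReflTransGen (fun x y => r x y ∧ x ≠ w ∧ y ≠ w) a b := by
  suffices ∀ y, ReflTransGen r a y →
      (y ≠ w → ReflTransGen (fun x y => r x y ∧ x ≠ w ∧ y ≠ w) a y) ∧
      (y = w → ReflTransGen (fun x y => r x y ∧ x ≠ w ∧ y ≠ w) a p) from
    (this b h).1 hb
  intro y hy
  induction hy with
  | refl => exact ⟨fun _ => .refl, fun h => absurd h ha⟩
  | @tail y z _ hyz ih =>
    by_cases hyw : y = w
    · subst hyw
      obtain rfl := hw z (symm hyz)
      exact ⟨fun _ => ih.2 rfl, fun _ => ih.2 rfl⟩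
    · by_cases hzw : z = w
      · subst hzw
        obtain rfl := hw y hyz
        exact ⟨fun h => absurd rfl h, fun _ => ih.1 hyw⟩
      · exact ⟨fun _ => (ih.1 hyw).tail ⟨hyz, hyw, hzw⟩, fun h => absurd h hzw⟩

end Relation.ReflTransGen

theorem List.IsChain.reflTransGen_of_mem {α : Type*} {r : α → α → Prop} [Std.Symm r]
    {l : List α} (hl : l.IsChain r) {a b : α} (ha : a ∈ l) (hb : b ∈ l) :
    Relation.ReflTransGen r a b := by
  have hne : l ≠ [] := List.ne_nil_of_mem ha
  have key := List.IsChain.induction (Relation.ReflTransGen r (l.head hne)) l hl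
    (fun _ _ hxy h => h.tail hxy) (fun _ => .refl)
  exact (symm (key a ha)).trans (key b hb)

theorem List.Nodup.eq_of_getElem?_eq_some {α : Type*} {l : List α} (hl : l.Nodup) {i j : ℕ}
    {a : α} (hi : l[i]? = some a) (hj : l[j]? = some a) : i = j :=
  (List.getElem?_inj (List.getElem?_eq_some_iff.1 hi).1 hl).1 (hi.trans hj.symm)

section EdgeSet

open Relation

variable {V SE : Type*} {E : Set (V × V × SE)} {q f g : V × V × SE} {u w x y : V}
  {l : List V}

def EdgeAdj (E : Set (V × V × SE)) (x y : V) : Prop :=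
  ∃ l, (x, y, l) ∈ E ∨ (y, x, l) ∈ E

def Joins (q : V × V × SE) (u w : V) : Prop :=
  (q.1 = u ∧ q.2.1 = w) ∨ (q.1 = w ∧ q.2.1 = u)

/-- `q` lies on a cycle of `E`, i.e. it is not a bridge. -/
def HasDetour (E : Set (V × V × SE)) (q : V × V × SE) : Prop :=
  ReflTransGen (EdgeAdj (E \ {q})) q.1 q.2.1

theorem Joins.symm (h : Joins q u w) : Joins q w u := Or.symm h

theorem joins_self (q : V × V × SE) : Joins q q.1 q.2.1 := Or.inl ⟨rfl, rfl⟩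

theorem Joins.left_mem (h : Joins q u w) : q.1 = u ∨ q.2.1 = u := by
  rcases h with ⟨h, -⟩ | ⟨-, h⟩
  exacts [Or.inl h, Or.inr h]

theorem Joins.eq_or_eq_of_joins {a b : V} (h : Joins q a b) (h' : Joins q u w) :
    (a = u ∧ b = w) ∨ (a = w ∧ b = u) := by
  unfold Joins at h h'
  grind

theorem Joins.left_unique {a : V} (hq : q.1 ≠ q.2.1) (h : Joins q a w) (h' : Joins q u w) :
    a = u := by
  unfold Joins at h h'
  grind

theorem edgeAdj_iff : EdgeAdj E x y ↔ ∃ q ∈ E, Joins q x y := by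
  constructor
  · rintro ⟨l, h | h⟩
    exacts [⟨_, h, Or.inl ⟨rfl, rfl⟩⟩, ⟨_, h, Or.inr ⟨rfl, rfl⟩⟩]
  · rintro ⟨⟨a, b, l⟩, hq, ⟨rfl, rfl⟩ | ⟨rfl, rfl⟩⟩
    exacts [⟨l, Or.inl hq⟩, ⟨l, Or.inr hq⟩]

theorem EdgeAdj.of_joins (hq : q ∈ E) (h : Joins q x y) : EdgeAdj E x y :=
  edgeAdj_iff.2 ⟨q, hq, h⟩

theorem EdgeAdj.symm (h : EdgeAdj E x y) : EdgeAdj E y x :=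
  let ⟨l, h⟩ := h; ⟨l, h.symm⟩

instance : Std.Symm (EdgeAdj E) := ⟨fun _ _ => EdgeAdj.symm⟩

theorem EdgeAdj.mono {E' : Set (V × V × SE)} (hE : E ⊆ E') (h : EdgeAdj E x y) :
    EdgeAdj E' x y :=
  let ⟨l, h⟩ := h; ⟨l, h.imp (@hE _) (@hE _)⟩

theorem hasDetour_of_joins (h : Joins q u w) (hr : ReflTransGen (EdgeAdj (E \ {q})) u w) :
    HasDetour E q := by
  rcases h with ⟨h1, h2⟩ | ⟨h1, h2⟩
  · rw [HasDetour, h1, h2]; exact hr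
  · rw [HasDetour, h1, h2]; exact symm hr

theorem HasDetour.reflTransGen_diff (hq : HasDetour E q) (h : ReflTransGen (EdgeAdj E) x y) :
    ReflTransGen (EdgeAdj (E \ {q})) x y := by
  induction h with
  | refl => exact .refl
  | tail _ hbc ih =>
    obtain ⟨f, hf, hj⟩ := edgeAdj_iff.1 hbc
    by_cases hfq : f = q
    · subst hfq
      rcases hj with ⟨h1, h2⟩ | ⟨h1, h2⟩
      · exact ih.trans (h1 ▸ h2 ▸ hq)
      · exact ih.trans (h1 ▸ h2 ▸ symm hq)
    · exact ih.tail (.of_joins ⟨hf, hfq⟩ hj)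

theorem HasDetour.exists_ne_incident (hq : HasDetour E q) (hnl : q.1 ≠ q.2.1)
    (hx : q.1 = x ∨ q.2.1 = x) :
    ∃ g ∈ E, g ≠ q ∧ (g.1 = x ∨ g.2.1 = x) := by
  have key : ∀ a b, ReflTransGen (EdgeAdj (E \ {q})) a b → a ≠ b →
      ∃ g ∈ E, g ≠ q ∧ (g.1 = a ∨ g.2.1 = a) := fun a b h hab => by
    obtain ⟨c, hc, -⟩ := h.exists_head_avoiding hab
    obtain ⟨g, ⟨hg, hgq⟩, hj⟩ := edgeAdj_iff.1 hc
    exact ⟨g, hg, hgq, hj.left_mem⟩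
  rcases hx with rfl | rfl
  exacts [key _ _ hq hnl, key _ _ (symm hq) hnl.symm]

theorem reflTransGen_diff_of_avoiding (hw : q.1 = w ∨ q.2.1 = w)
    (h : ReflTransGen (fun a b => EdgeAdj E a b ∧ a ≠ w ∧ b ≠ w) x y) :
    ReflTransGen (EdgeAdj (E \ {q})) x y := by
  refine ReflTransGen.mono (fun a b hab => ?_) _ _ h
  obtain ⟨g, hg, hj⟩ := edgeAdj_iff.1 hab.1
  refine .of_joins ⟨hg, ?_⟩ hj
  rintro rfl
  unfold Joins at hj
  grind

/-- Take the first edge `f` of a detour for `q` after which the detour never returns to `q.1`;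
the rest of the detour, followed by `q`, is a detour for `f`. -/
theorem exists_ne_hasDetour (hnl : q.1 ≠ q.2.1) (hqE : q ∈ E) (hq : HasDetour E q) :
    ∃ f ∈ E, f ≠ q ∧ HasDetour E f := by
  obtain ⟨c, hc, hcq⟩ := hq.exists_head_avoiding hnl
  obtain ⟨f, ⟨hfE, hfq⟩, hf⟩ := edgeAdj_iff.1 hc
  have hcq' : ReflTransGen (fun a b => EdgeAdj E a b ∧ a ≠ q.1 ∧ b ≠ q.1) c q.2.1 :=
    ReflTransGen.mono (fun _ _ hab => ⟨hab.1.mono Set.sdiff_subset, hab.2⟩) _ _ hcq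
  have hback : EdgeAdj (E \ {f}) q.2.1 q.1 := .of_joins ⟨hqE, Ne.symm hfq⟩ (joins_self q).symm
  refine ⟨f, hfE, hfq, hasDetour_of_joins hf.symm ?_⟩
  exact (reflTransGen_diff_of_avoiding hf.left_mem hcq').tail hback

theorem List.IsChain.edgeAdj_diff (hl : l.IsChain (EdgeAdj E))
    (hq : ∀ i (h : i + 1 < l.length), ¬ Joins q l[i] l[i + 1]) :
    l.IsChain (EdgeAdj (E \ {q})) := by
  rw [List.isChain_iff_getElem] at hl ⊢
  intro i h
  obtain ⟨g, hg, hj⟩ := edgeAdj_iff.1 (hl i h)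
  exact .of_joins ⟨hg, by rintro rfl; exact hq i h hj⟩ hj

theorem List.IsChain.edgeAdj_diff_of_not_mem (hl : l.IsChain (EdgeAdj E))
    (hw : q.1 = w ∨ q.2.1 = w) (hwl : w ∉ l) : l.IsChain (EdgeAdj (E \ {q})) :=
  hl.edgeAdj_diff fun i h hj => hwl <| by
    rcases hj with ⟨h1, h2⟩ | ⟨h1, h2⟩ <;> rcases hw with rfl | rfl <;> simp [*]

theorem exists_joins_getElem (hq : ¬ HasDetour E q) (hl : l.IsChain (EdgeAdj E))
    (h1 : q.1 ∈ l) (h2 : q.2.1 ∈ l) :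
    ∃ i, ∃ h : i + 1 < l.length, Joins q l[i] l[i + 1] := by
  by_contra! hcon
  exact hq ((hl.edgeAdj_diff hcon).reflTransGen_of_mem h1 h2)

theorem eq_of_joins_of_not_hasDetour (hg : ¬ HasDetour E g) (hf : f ∈ E) (hjf : Joins f u w)
    (hjg : Joins g u w) : f = g := by
  by_contra hfg
  exact hg (hasDetour_of_joins hjg (.single (.of_joins ⟨hf, hfg⟩ hjf)))

end EdgeSet

def GraphElement.Mentions {V SV SE : Type*} : GraphElement V SV SE → V → Prop
  | Sum.inl p, x => p.1 = x
  | Sum.inr q, x => q.1 = x ∨ q.2.1 = x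

namespace LabeledGraph

open GraphElement

variable {V SV SE : Type*} (G : LabeledGraph V SV SE) {r r' : GraphElement V SV SE} {x y : V}

theorem occupied_iff : Occupied G.labels G.edges x ↔ ∃ r, G.HasElement r ∧ Mentions r x := by
  constructor
  · rintro (⟨l, hl⟩ | ⟨u, l, h | h⟩)
    exacts [⟨.inl (x, l), hl, rfl⟩, ⟨.inr (x, u, l), h, Or.inl rfl⟩,
      ⟨.inr (u, x, l), h, Or.inr rfl⟩]
  · rintro ⟨⟨⟨a, l⟩⟩ | ⟨⟨a, b, l⟩⟩, hr, hx⟩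
    · exact Or.inl ⟨l, hx ▸ hr⟩
    · rcases hx with rfl | rfl
      exacts [Or.inr ⟨b, l, Or.inl hr⟩, Or.inr ⟨a, l, Or.inr hr⟩]

theorem hasElement_removeElement :
    (G.removeElement r).HasElement r' ↔ G.HasElement r' ∧ r' ≠ r := by
  rcases r with p | q <;> rcases r' with p' | q' <;>
    simp [HasElement, removeElement, delLabels, delEdges]

theorem mem_removeElement_verts : x ∈ (G.removeElement r).verts ↔ x ∈ G.verts ∧
    ((∃ r', G.HasElement r' ∧ Mentions r' x) →
      ∃ r', G.HasElement r' ∧ r' ≠ r ∧ Mentions r' x) := by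
  have h := (G.removeElement r).occupied_iff (x := x)
  simp only [hasElement_removeElement, and_assoc] at h
  simp only [removeElement, Set.mem_ofPred_eq, ← G.occupied_iff]
  rw [← h]
  exact and_congr_right fun _ => or_iff_not_imp_right.trans (imp_congr_left not_not)

theorem mem_verts_of_hasElement (hr : G.HasElement r) (hx : Mentions r x) : x ∈ G.verts := by
  rcases r with p | q
  · exact hx ▸ G.labels_sub hr
  · rcases hx with rfl | rfl
    exacts [(G.edges_sub hr).1, (G.edges_sub hr).2]

theorem mem_verts_of_adj (h : G.Adj x y) : y ∈ G.verts := by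
  obtain ⟨q, hq, hj⟩ := edgeAdj_iff.1 h
  exact G.mem_verts_of_hasElement (r := .inr q) hq hj.symm.left_mem

theorem ne_of_adj (h : G.Adj x y) : x ≠ y := by
  obtain ⟨q, hq, hj⟩ := edgeAdj_iff.1 h
  rintro rfl
  exact G.no_loops hq (by rcases hj with ⟨h1, h2⟩ | ⟨h1, h2⟩ <;> rw [h1, h2])

instance : Std.Symm G.Adj := inferInstanceAs (Std.Symm (EdgeAdj G.edges))

end LabeledGraph

namespace PivotedGraph

open Relation GraphElement LabeledGraph

variable {V SV SE : Type*} {P : PivotedGraph V SV SE} {r : GraphElement V SV SE}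

theorem Connected.verts_subset (hconn : P.Connected) {S : Set V} (hpiv : P.pivot ∈ S)
    (hS : ∀ x y, P.Adj x y → x ∈ S → y ∈ S) : P.verts ⊆ S :=
  fun x hx => (symm (hconn x hx)).mem_of_closed hpiv hS

theorem Connected.size_le_one (hconn : P.Connected) (hpiv : Mentions r P.pivot)
    (hr : ∀ r' x, P.HasElement r' → Mentions r x → Mentions r' x → r' = r) :
    P.size ≤ 1 := by
  have hverts : P.verts ⊆ {x | Mentions r x} := hconn.verts_subset hpiv fun x y hxy hx => by
    obtain ⟨q, hq, hj⟩ := edgeAdj_iff.1 hxy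
    obtain rfl := hr (.inr q) x hq hx hj.left_mem
    exact hj.symm.left_mem
  have hall : ∀ r', P.HasElement r' → r' = r := by
    rintro (p | q) hr'
    · exact hr _ p.1 hr' (hverts (P.mem_verts_of_hasElement (r := .inl p) hr' rfl)) rfl
    · exact hr _ q.1 hr' (hverts (P.mem_verts_of_hasElement (r := .inr q) hr' (Or.inl rfl)))
        (Or.inl rfl)
  have hL : P.labels ⊆ {p | Sum.inl p = r} := fun p hp => hall (.inl p) hp
  have hE : P.edges ⊆ {q | Sum.inr q = r} := fun q hq => hall (.inr q) hq
  rcases r with p | e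
  · simp only [Sum.inl.injEq, reduceCtorEq, Set.ofPred_false, Set.subset_empty_iff,
      Set.ofPred_eq_eq_singleton] at hL hE
    simpa [size, hE] using Set.ncard_le_ncard hL
  · simp only [Sum.inr.injEq, reduceCtorEq, Set.ofPred_false, Set.subset_empty_iff,
      Set.ofPred_eq_eq_singleton] at hL hE
    simpa [size, hL] using Set.ncard_le_ncard hE

/-- If the pivot carried only `r`, then `hr` would make `r` all of `P`. -/
theorem pivot_mem_removeElement_verts (hconn : P.Connected) (hsize : 2 ≤ P.size)
    (hr : Mentions r P.pivot → ∀ x, Mentions r x → x ≠ P.pivot →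
      ∀ r', P.HasElement r' → Mentions r' x → r' = r) :
    P.pivot ∈ (P.removeElement r).verts := by
  rw [mem_removeElement_verts]
  refine ⟨P.pivot_mem, fun ⟨r', hr', hm⟩ => ?_⟩
  by_contra! hall
  have hpiv : Mentions r P.pivot := by
    by_contra hn
    exact hall r' hr' (by rintro rfl; exact hn hm) hm
  have := hconn.size_le_one hpiv fun r'' x h'' hx hx'' => by
    by_cases hxp : x = P.pivot
    · subst hxp
      by_contra hne
      exact hall r'' h'' hne hx''
    · exact hr hpiv x hx hxp r'' h'' hx''
  omega

theorem connectedAfterRemove_inl (hconn : P.Connected) (hsize : 2 ≤ P.size) (p : V × SV) :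
    P.ConnectedAfterRemove (.inl p) := by
  refine ⟨pivot_mem_removeElement_verts hconn hsize fun hp x hx hxp => ?_,
    fun x hx => hconn x ((mem_removeElement_verts _).1 hx).1⟩
  exact absurd (hx.symm.trans hp) hxp

theorem connectedAfterRemove_of_hasDetour (hconn : P.Connected) {q : V × V × SE}
    (hqE : q ∈ P.edges) (hq : HasDetour P.edges q) : P.ConnectedAfterRemove (.inr q) := by
  refine ⟨(mem_removeElement_verts _).2 ⟨P.pivot_mem, fun ⟨r', hr', hm⟩ => ?_⟩,
    fun x hx => hq.reflTransGen_diff (hconn x ((mem_removeElement_verts _).1 hx).1)⟩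
  by_cases hr'q : r' = .inr q
  · subst hr'q
    obtain ⟨g, hg, hgq, hgm⟩ := hq.exists_ne_incident (P.no_loops hqE) hm
    exact ⟨.inr g, hg, by simpa using hgq, hgm⟩
  · exact ⟨r', hr', hr'q, hm⟩

/-- `w` disappears with `e`, and no walk between other vertices needs `e`. -/
theorem connectedAfterRemove_of_pendant (hconn : P.Connected) (hsize : 2 ≤ P.size)
    {e : V × V × SE} (he : e ∈ P.edges) {p w : V} (hj : Joins e p w)
    (hw : ∀ r', P.HasElement r' → Mentions r' w → r' = .inr e) (hwp : w ≠ P.pivot) :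
    P.ConnectedAfterRemove (.inr e) := by
  have hew : e.1 = w ∨ e.2.1 = w := hj.symm.left_mem
  refine ⟨pivot_mem_removeElement_verts hconn hsize fun hpiv x hx hxp => ?_, fun x hx => ?_⟩
  · have hxw : x = w := by
      change e.1 = P.pivot ∨ e.2.1 = P.pivot at hpiv
      change e.1 = x ∨ e.2.1 = x at hx
      unfold Joins at hj
      grind
    exact hxw ▸ hw
  · obtain ⟨hxV, hxo⟩ := (mem_removeElement_verts _).1 hx
    have hxw : x ≠ w := by
      rintro rfl
      obtain ⟨r', hr', hne, hm⟩ := hxo ⟨.inr e, he, hew⟩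
      exact hne (hw r' hr' hm)
    have hsole : ∀ a, P.Adj a w → a = p := fun a ha => by
      obtain ⟨g, hg, hjg⟩ := edgeAdj_iff.1 ha
      obtain rfl : g = e := Sum.inr.inj (hw (.inr g) hg hjg.symm.left_mem)
      exact hjg.left_unique (P.no_loops he) hj
    exact reflTransGen_diff_of_avoiding hew
      ((hconn x hxV).avoiding_of_sole_neighbor hsole hxw hwp.symm)

theorem eq_of_connectedAfterRemove (hnd : ¬ P.Decomposable) {r₁ r₂ : GraphElement V SV SE}
    (h₁ : P.HasElement r₁) (h₂ : P.HasElement r₂) (c₁ : P.ConnectedAfterRemove r₁)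
    (c₂ : P.ConnectedAfterRemove r₂) : r₁ = r₂ := by
  by_contra hne
  exact hnd ⟨r₁, r₂, hne, h₁, h₂, c₁, c₂⟩

theorem not_hasDetour_of_not_decomposable (hconn : P.Connected) (hnd : ¬ P.Decomposable)
    {q : V × V × SE} (hq : q ∈ P.edges) : ¬ HasDetour P.edges q := fun hd => by
  obtain ⟨f, hf, hfq, hfd⟩ := exists_ne_hasDetour (P.no_loops hq) hq hd
  exact hfq (Sum.inr.inj (eq_of_connectedAfterRemove hnd hf hq
    (connectedAfterRemove_of_hasDetour hconn hf hfd)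
    (connectedAfterRemove_of_hasDetour hconn hq hd)))

theorem labels_subsingleton_of_not_decomposable (hconn : P.Connected) (hsize : 2 ≤ P.size)
    (hnd : ¬ P.Decomposable) : P.labels.Subsingleton := fun p hp p' hp' =>
  Sum.inl.inj (eq_of_connectedAfterRemove hnd hp hp' (connectedAfterRemove_inl hconn hsize p)
    (connectedAfterRemove_inl hconn hsize p'))

theorem Connected.verts_finite (hconn : P.Connected) (hE : P.edges.Finite) : P.verts.Finite := by
  refine (((hE.image Prod.fst).union (hE.image fun q => q.2.1)).insert P.pivot).subset
    fun x hx => ?_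
  rcases (hconn x hx).cases_head with rfl | ⟨c, hxc, -⟩
  · exact Set.mem_insert _ _
  · obtain ⟨q, hq, h | h⟩ := edgeAdj_iff.1 hxc
    exacts [Or.inr (Or.inl ⟨q, hq, h.1⟩), Or.inr (Or.inr ⟨q, hq, h.2⟩)]

theorem Connected.exists_adj_pivot (hconn : P.Connected) (hE : P.edges.Nonempty) :
    ∃ z, P.Adj P.pivot z := by
  obtain ⟨q, hq⟩ := hE
  rcases (hconn q.1 (P.edges_sub hq).1).cases_tail with h | ⟨c, -, hc⟩
  · exact ⟨q.2.1, h ▸ EdgeAdj.of_joins hq (joins_self q)⟩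
  · exact ⟨c, symm hc⟩

/-- A simple path ending at the pivot, listed from its free end. -/
structure IsPivotPath (P : PivotedGraph V SV SE) (l : List V) : Prop where
  nodup : l.Nodup
  isChain : l.IsChain P.Adj
  getLast?_eq : l.getLast? = some P.pivot
  subset_verts : ∀ x ∈ l, x ∈ P.verts

structure IsMaximalPivotPath (P : PivotedGraph V SV SE) (l : List V) : Prop
    extends P.IsPivotPath l where
  maximal : ∀ w ∈ l.head?, ∀ z, P.Adj w z → z ∈ l

theorem isPivotPath_singleton : P.IsPivotPath [P.pivot] :=
  ⟨List.nodup_singleton _, List.isChain_singleton _, rfl, by simpa using P.pivot_mem⟩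

theorem IsPivotPath.ne_nil {l : List V} (hl : P.IsPivotPath l) : l ≠ [] := by
  rintro rfl
  simpa using hl.getLast?_eq

theorem IsPivotPath.suffix {l l' : List V} (hl : P.IsPivotPath l) (h : l' <:+ l)
    (hne : l' ≠ []) : P.IsPivotPath l' := by
  obtain ⟨s, rfl⟩ := h
  refine ⟨hl.nodup.sublist (List.sublist_append_right _ _), hl.isChain.suffix ⟨s, rfl⟩, ?_,
    fun x hx => hl.subset_verts x (List.mem_append_right _ hx)⟩
  rw [← hl.getLast?_eq, List.getLast?_append_of_ne_nil _ hne]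

theorem IsPivotPath.cons {w z : V} {l : List V} (hl : P.IsPivotPath (w :: l)) (hz : z ∉ w :: l)
    (hwz : P.Adj w z) : P.IsPivotPath (z :: w :: l) :=
  ⟨List.nodup_cons.2 ⟨hz, hl.nodup⟩, List.isChain_cons_cons.2 ⟨symm hwz, hl.isChain⟩,
    List.getLast?_cons_cons.trans hl.getLast?_eq,
    List.forall_mem_cons.2 ⟨P.mem_verts_of_adj hwz, hl.subset_verts⟩⟩

theorem IsPivotPath.length_le {l : List V} (hl : P.IsPivotPath l) (hfin : P.verts.Finite) :
    l.length ≤ hfin.toFinset.card := by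
  classical
  rw [← List.toFinset_card_of_nodup hl.nodup]
  exact Finset.card_le_card fun x hx => by simpa using hl.subset_verts x (by simpa using hx)

theorem IsPivotPath.exists_maximal (hfin : P.verts.Finite) {l₀ : List V}
    (h : P.IsPivotPath l₀) : ∃ l, P.IsMaximalPivotPath l ∧ l₀ <:+ l := by
  by_cases hmax : ∀ w ∈ l₀.head?, ∀ z, P.Adj w z → z ∈ l₀
  · exact ⟨l₀, ⟨h, hmax⟩, List.suffix_refl _⟩
  push Not at hmax
  obtain ⟨w, hw, z, hwz, hz⟩ := hmax
  obtain ⟨t, rfl⟩ : ∃ t, l₀ = w :: t := by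
    obtain ⟨b, t, rfl⟩ := List.exists_cons_of_ne_nil h.ne_nil
    exact ⟨t, by simpa using hw⟩
  have h' := h.cons hz hwz
  have : hfin.toFinset.card - (z :: w :: t).length < hfin.toFinset.card - (w :: t).length := by
    have := h'.length_le hfin
    simp only [List.length_cons] at this ⊢
    omega
  obtain ⟨l, hl, hsuf⟩ := h'.exists_maximal hfin
  exact ⟨l, hl, (List.suffix_cons z _).trans hsuf⟩
termination_by hfin.toFinset.card - l₀.length

/-- The element is the label of `w` if there is one, and otherwise the only edge at `w`: any
other edge at `w` leads back into the path and closes a cycle. -/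
theorem IsMaximalPivotPath.exists_removable_at_head (hconn : P.Connected) (hsize : 2 ≤ P.size)
    (hbr : ∀ q ∈ P.edges, ¬ HasDetour P.edges q) {w : V} {t : List V}
    (hl : P.IsMaximalPivotPath (w :: t)) (ht : t ≠ []) :
    ∃ r, P.HasElement r ∧ P.ConnectedAfterRemove r ∧ Mentions r w ∧
      ∀ x, Mentions r x → x ∈ w :: t := by
  obtain ⟨p, t, rfl⟩ := List.exists_cons_of_ne_nil ht
  obtain ⟨e, he, hje⟩ := edgeAdj_iff.1 (List.isChain_cons_cons.1 hl.isChain).1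
  have hwt : w ∉ p :: t := (List.nodup_cons.1 hl.nodup).1
  have hsole : ∀ f ∈ P.edges, (f.1 = w ∨ f.2.1 = w) → f = e := by
    intro f hf hfw
    by_contra hfe
    obtain ⟨y, hjy⟩ : ∃ y, Joins f w y := by
      rcases hfw with h | h
      exacts [⟨f.2.1, Or.inl ⟨h, rfl⟩⟩, ⟨f.1, Or.inr ⟨rfl, h⟩⟩]
    have hwy : P.Adj w y := EdgeAdj.of_joins hf hjy
    have hy : y ∈ p :: t :=
      (List.mem_cons.1 (hl.maximal w rfl y hwy)).resolve_left (P.ne_of_adj hwy).symm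
    have hch := hl.isChain.tail.edgeAdj_diff_of_not_mem hfw hwt
    have hstep : EdgeAdj (P.edges \ {f}) p w := .of_joins ⟨he, Ne.symm hfe⟩ hje.symm
    exact hbr f hf (hasDetour_of_joins hjy.symm
      ((hch.reflTransGen_of_mem hy List.mem_cons_self).tail hstep))
  have hwpiv : w ≠ P.pivot := by
    rintro rfl
    exact hwt (List.mem_of_getLast? (List.getLast?_cons_cons.symm.trans hl.getLast?_eq))
  by_cases hlab : ∃ a, (w, a) ∈ P.labels
  · obtain ⟨a, ha⟩ := hlab
    exact ⟨.inl (w, a), ha, connectedAfterRemove_inl hconn hsize _, rfl,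
      fun x hx => hx ▸ List.mem_cons_self⟩
  refine ⟨.inr e, he, connectedAfterRemove_of_pendant hconn hsize he hje.symm ?_ hwpiv,
    hje.left_mem, ?_⟩
  · rintro (⟨x, a⟩ | f) hr hm
    · exact absurd ⟨a, hm ▸ hr⟩ hlab
    · exact congrArg Sum.inr (hsole f hr hm)
  · rintro x (rfl | rfl) <;> rcases hje with ⟨h1, h2⟩ | ⟨h1, h2⟩ <;> simp [h1, h2]

/-- Leaving the path along an edge `f` and prolonging to a second maximal path gives two
maximal paths whose free ends carry the same removable element; following both paths back to
that element closes a cycle through `f`. -/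
theorem IsMaximalPivotPath.mem_of_adj (hconn : P.Connected) (hsize : 2 ≤ P.size)
    (hnd : ¬ P.Decomposable) (hfin : P.verts.Finite) {w : V} {t : List V}
    (hl : P.IsMaximalPivotPath (w :: t)) (ht : t ≠ []) {y z : V} (hy : y ∈ w :: t)
    (hyz : P.Adj y z) : z ∈ w :: t := by
  by_contra hz
  have hbr : ∀ q ∈ P.edges, ¬ HasDetour P.edges q := fun q hq =>
    not_hasDetour_of_not_decomposable hconn hnd hq
  obtain ⟨r₁, hr₁, hc₁, -, hloc₁⟩ := hl.exists_removable_at_head hconn hsize hbr ht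
  obtain ⟨pre, suf, hsplit⟩ := List.append_of_mem hy
  have hpath : P.IsPivotPath (z :: y :: suf) :=
    (hl.suffix (hsplit ▸ List.suffix_append pre _) (List.cons_ne_nil _ _)).cons
      (fun h => hz (hsplit ▸ List.mem_append_right _ h)) hyz
  obtain ⟨l₂, hl₂, pre₂, rfl⟩ := hpath.exists_maximal hfin
  obtain ⟨w₂, A, hA⟩ := List.exists_cons_of_ne_nil (List.concat_ne_nil z pre₂)
  obtain ⟨f, hf, hjf⟩ := edgeAdj_iff.1 hyz
  rw [show pre₂ ++ z :: y :: suf = (pre₂ ++ [z]) ++ y :: suf by simp] at hl₂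
  have hyA : y ∉ pre₂ ++ [z] := fun h =>
    List.disjoint_of_nodup_append hl₂.nodup h List.mem_cons_self
  have hAz : ReflTransGen (EdgeAdj (P.edges \ {f})) w₂ z :=
    (hl₂.isChain.left_of_append.edgeAdj_diff_of_not_mem hjf.left_mem hyA).reflTransGen_of_mem
      (hA ▸ List.mem_cons_self) (by simp)
  rw [hA, List.cons_append] at hl₂
  obtain ⟨r₂, hr₂, hc₂, hm₂, -⟩ :=
    hl₂.exists_removable_at_head hconn hsize hbr (by simp)
  have hw₂ : w₂ ∈ w :: t :=
    hloc₁ w₂ (eq_of_connectedAfterRemove hnd hr₁ hr₂ hc₁ hc₂ ▸ hm₂)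
  have hyw₂ : ReflTransGen (EdgeAdj (P.edges \ {f})) y w₂ :=
    (hl.isChain.edgeAdj_diff_of_not_mem hjf.symm.left_mem hz).reflTransGen_of_mem hy hw₂
  exact hbr f hf (hasDetour_of_joins hjf (hyw₂.trans hAz))

theorem IsPivotPath.isPathPattern (hbr : ∀ q ∈ P.edges, ¬ HasDetour P.edges q) {w : V}
    {t : List V} (hl : P.IsPivotPath (w :: t)) (hverts : P.verts ⊆ {x | x ∈ w :: t})
    (hlab : P.labels.Subsingleton) (hlabw : ∀ p ∈ P.labels, p.1 = w) : P.IsPathPattern := by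
  have hch : (w :: t).reverse.IsChain (EdgeAdj P.edges) :=
    List.isChain_reverse.2 (hl.isChain.imp fun _ _ h => symm h)
  refine ⟨(w :: t).reverse, by simp, List.nodup_reverse.2 hl.nodup,
    List.head?_reverse.trans hl.getLast?_eq, ?_, fun q hq => ?_, fun i u x hu hx => ?_, hlab,
    fun p hp => by rw [List.getLast?_reverse, hlabw p hp]; rfl⟩
  · exact Set.ext fun x => ⟨fun hx => List.mem_reverse.2 (hverts hx),
      fun hx => hl.subset_verts x (List.mem_reverse.1 hx)⟩
  · obtain ⟨i, hi, hj⟩ := exists_joins_getElem (hbr q hq) hch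
      (List.mem_reverse.2 (hverts (P.edges_sub hq).1))
      (List.mem_reverse.2 (hverts (P.edges_sub hq).2))
    exact ⟨i, _, _, List.getElem?_eq_getElem (by omega), List.getElem?_eq_getElem hi, hj⟩
  · obtain ⟨hi, rfl⟩ := List.getElem?_eq_some_iff.1 hu
    obtain ⟨hi1, rfl⟩ := List.getElem?_eq_some_iff.1 hx
    obtain ⟨g, hg, hjg⟩ := edgeAdj_iff.1 (List.isChain_iff_getElem.1 hch i hi1)
    exact ⟨g, ⟨hg, hjg⟩,
      fun g' ⟨hg', hj'⟩ => eq_of_joins_of_not_hasDetour (hbr g hg) hg' hj' hjg⟩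

theorem isPathPattern_of_not_decomposable (hconn : P.Connected) (hsize : 2 ≤ P.size)
    (hnd : ¬ P.Decomposable) : P.IsPathPattern := by
  have hbr : ∀ q ∈ P.edges, ¬ HasDetour P.edges q := fun q hq =>
    not_hasDetour_of_not_decomposable hconn hnd hq
  have hlab := labels_subsingleton_of_not_decomposable hconn hsize hnd
  have hE : 0 < P.edges.ncard := by
    have := (Set.ncard_le_one_iff hlab.finite).2 fun ha hb => hlab ha hb
    unfold size at hsize
    omega
  have hfin := hconn.verts_finite (Set.finite_of_ncard_pos hE)
  obtain ⟨l, hl, -⟩ := isPivotPath_singleton.exists_maximal hfin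
  obtain ⟨w, t, rfl⟩ := List.exists_cons_of_ne_nil hl.ne_nil
  have ht : t ≠ [] := by
    rintro rfl
    obtain rfl : w = P.pivot := by simpa using hl.getLast?_eq
    obtain ⟨z, hz⟩ := hconn.exists_adj_pivot (Set.nonempty_of_ncard_ne_zero hE.ne')
    have hzp : z = P.pivot := by simpa using hl.maximal _ rfl z hz
    exact P.ne_of_adj hz hzp.symm
  obtain ⟨r, hr, hc, hm, -⟩ := hl.exists_removable_at_head hconn hsize hbr ht
  refine hl.isPathPattern hbr (hconn.verts_subset (List.mem_of_getLast? hl.getLast?_eq)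
    fun x y hxy hx => hl.mem_of_adj hconn hsize hnd hfin ht hx hxy) hlab fun p hp => ?_
  obtain rfl := eq_of_connectedAfterRemove (r₁ := .inl p) hnd hp hr
    (connectedAfterRemove_inl hconn hsize p) hc
  exact hm

/-- In a path pattern, removing the edge `q` from `vs[i]` to `vs[i+1]` cuts `vs[i+1]` off the
pivot unless `vs[i+1]` disappears; so `q` is the last edge and the last vertex carries
nothing else. -/
theorem getLast_sole_element_of_connectedAfterRemove {vs : List V} (hnd : vs.Nodup)
    (hhead : vs.head? = some P.pivot)
    (hedge : ∀ q ∈ P.edges, ∃ i u w, vs[i]? = some u ∧ vs[i + 1]? = some w ∧ Joins q u w)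
    (huniq : ∀ i u w, vs[i]? = some u → vs[i + 1]? = some w →
      ∃! q : V × V × SE, q ∈ P.edges ∧ Joins q u w)
    {q : V × V × SE} (hq : q ∈ P.edges) (hc : P.ConnectedAfterRemove (.inr q)) {y : V}
    (hy : vs.getLast? = some y) :
    (q.1 = y ∨ q.2.1 = y) ∧ ∀ r, P.HasElement r → Mentions r y → r = .inr q := by
  obtain ⟨i, u, x, hu, hx, hj⟩ := hedge q hq
  let far : Set V := {a | ∃ j, i < j ∧ vs[j]? = some a}
  have hfar : ∀ a b, EdgeAdj (P.edges \ {q}) a b → a ∈ far → b ∈ far := by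
    rintro a b hab ⟨j, hij, hja⟩
    obtain ⟨g, ⟨hg, hgq⟩, hjg⟩ := edgeAdj_iff.1 hab
    obtain ⟨m, a', b', hm, hm1, hjg'⟩ := hedge g hg
    rcases hjg.eq_or_eq_of_joins hjg' with ⟨rfl, rfl⟩ | ⟨rfl, rfl⟩
    · exact ⟨m + 1, by have := hnd.eq_of_getElem?_eq_some hja hm; omega, hm1⟩
    · refine ⟨m, ?_, hm⟩
      have := hnd.eq_of_getElem?_eq_some hja hm1
      rcases (by omega : i < m ∨ i = m) with h | rfl
      · exact h
      · obtain rfl := Option.some_injective _ (hm.symm.trans hu)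
        obtain rfl := Option.some_injective _ (hm1.symm.trans hx)
        exact absurd ((huniq _ _ _ hu hx).unique ⟨hg, hjg.symm⟩ ⟨hq, hj⟩) hgq
  have hsole : ∀ r, P.HasElement r → Mentions r x → r = .inr q := by
    by_contra! hcon
    obtain ⟨r, hr, hrx, hrq⟩ := hcon
    have hxV := P.mem_verts_of_hasElement (r := .inr q) hq hj.symm.left_mem
    have hxr : x ∈ (P.removeElement (.inr q)).verts :=
      (mem_removeElement_verts _).2 ⟨hxV, fun _ => ⟨r, hr, hrq, hrx⟩⟩
    have hpiv : P.pivot ∈ far := (hc.2 x hxr).mem_of_closed ⟨i + 1, by omega, hx⟩ hfar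
    obtain ⟨j, hij, hj⟩ := hpiv
    have := hnd.eq_of_getElem?_eq_some hj (List.head?_eq_getElem?.symm.trans hhead)
    omega
  have hlen : vs.length = i + 2 := by
    have hi1 := (List.getElem?_eq_some_iff.1 hx).1
    by_contra hne
    obtain ⟨g, ⟨hg, hjg⟩, -⟩ := huniq (i + 1) x _ hx (List.getElem?_eq_getElem (by omega))
    obtain rfl := Sum.inr.inj (hsole _ hg hjg.left_mem)
    rcases hjg.eq_or_eq_of_joins hj with ⟨h1, -⟩ | ⟨-, h2⟩
    · have := hnd.eq_of_getElem?_eq_some hx (h1 ▸ hu)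
      omega
    · have := hnd.eq_of_getElem?_eq_some (List.getElem?_eq_getElem (by omega)) (h2 ▸ hu)
      omega
  obtain rfl : x = y := by
    rw [List.getLast?_eq_getElem?, hlen] at hy
    exact Option.some_injective _ (hx.symm.trans hy)
  exact ⟨hj.symm.left_mem, hsole⟩

theorem IsPathPattern.not_decomposable (hp : P.IsPathPattern) : ¬ P.Decomposable := by
  obtain ⟨vs, hne, hnd, hhead, -, hedge, huniq, hlab, hlast⟩ := hp
  obtain ⟨y, hy⟩ := Option.ne_none_iff_exists'.1 (List.getLast?_eq_none_iff.not.2 hne)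
  have key := fun q hq hc =>
    getLast_sole_element_of_connectedAfterRemove hnd hhead hedge huniq (q := q) hq hc hy
  have hmen : ∀ r, P.HasElement r → P.ConnectedAfterRemove r → Mentions r y := by
    rintro (p | q) hr hc
    · exact Option.some_injective _ ((hlast p hr).symm.trans hy)
    · exact (key q hr hc).1
  rintro ⟨r₁, r₂, hne, h₁, h₂, c₁, c₂⟩
  rcases r₁ with p₁ | q₁
  · rcases r₂ with p₂ | q₂
    · exact hne (congrArg Sum.inl (hlab h₁ h₂))
    · exact hne ((key q₂ h₂ c₂).2 _ h₁ (hmen _ h₁ c₁))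
  · exact hne ((key q₁ h₁ c₁).2 _ h₂ (hmen _ h₂ c₂)).symm

end PivotedGraph

theorem not_decomposable_iff_isPathPattern_general {V SV SE : Type*}
    (P : PivotedGraph V SV SE) (hconn : P.Connected)
    (hsize : 2 ≤ P.toLabeledGraph.size) :
    ¬ P.Decomposable ↔ P.IsPathPattern :=
  ⟨P.isPathPattern_of_not_decomposable hconn hsize, PivotedGraph.IsPathPattern.not_decomposable⟩

/-- A neighborhood pattern of finite size at least 2 is not
decomposable if and only if it is a path pattern. -/
theorem not_decomposable_iff_isPathPattern {V SV SE : Type*}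
    (P : PivotedGraph V SV SE) (hconn : P.Connected)
    (hL : P.labels.Finite) (hE : P.edges.Finite)
    (hsize : 2 ≤ P.toLabeledGraph.size) :
    ¬ P.Decomposable ↔ P.IsPathPattern :=
  not_decomposable_iff_isPathPattern_general P hconn hsize
end

section
/- Correctness of the reduction from subgraph isomorphism to pivoted subgraph isomorphism: let G_1 and G_2 be directed graphs given by irreflexive edge relations on vertex sets V_1 and V_2. Form G_1' by adjoining a new vertex v_1 ∉ V_1 together with an edge from v_1 to every vertex of V_1, and form G_2' analogously with a new vertex v_2 ∉ V_2. Then there exists an injective homomorphism from G_1 to G_2 if and only if there exists an injective homomorphism from G_1' to G_2' that maps v_1 to v_2. -/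
/-- Adjoin a new vertex (`none`) to a directed graph, with an edge from the new vertex
to every original vertex. -/
def adjoinVertex {V : Type*} (E : V → V → Prop) : Option V → Option V → Prop
  | some u, some w => E u w
  | none, some _ => True
  | _, _ => False

theorem Option.exists_eq_map_of_injective_of_apply_none {α β : Type*}
    {g : Option α → Option β} (hg : Function.Injective g) (hnone : g none = none) :
    ∃ f : α → β, g = Option.map f := by
  have hsome (a : α) : g (some a) ≠ none := fun h =>
    Option.some_ne_none a (hg (h.trans hnone.symm))
  refine ⟨fun a => (g (some a)).get (Option.isSome_iff_ne_none.mpr (hsome a)), ?_⟩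
  funext a
  cases a with
  | none => exact hnone
  | some a => simp

theorem Option.injective_of_injective_map {α β : Type*} {f : α → β}
    (hf : Function.Injective (Option.map f)) : Function.Injective f :=
  fun _ _ h => Option.some_injective _ (hf (congrArg some h))

theorem adjoinVertex_map {V W : Type*} {E : V → V → Prop} {E' : W → W → Prop} {f : V → W}
    (hf : ∀ u w, E u w → E' (f u) (f w)) :
    ∀ a b : Option V, adjoinVertex E a b → adjoinVertex E' (a.map f) (b.map f)
  | some u, some w, h => hf u w h
  | none, some _, _ => trivial

theorem reduction_correct_general {V₁ V₂ : Type*} (E₁ : V₁ → V₁ → Prop) (E₂ : V₂ → V₂ → Prop) :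
    (∃ f : V₁ → V₂, Function.Injective f ∧ ∀ u w, E₁ u w → E₂ (f u) (f w)) ↔
    (∃ g : Option V₁ → Option V₂, Function.Injective g ∧
      (∀ a b : Option V₁, adjoinVertex E₁ a b → adjoinVertex E₂ (g a) (g b)) ∧
      g none = none) := by
  constructor
  · rintro ⟨f, hf, hE⟩
    exact ⟨Option.map f, Option.map_injective hf, adjoinVertex_map hE, rfl⟩
  · rintro ⟨g, hg, hE, hnone⟩
    obtain ⟨f, rfl⟩ := Option.exists_eq_map_of_injective_of_apply_none hg hnone
    exact ⟨f, Option.injective_of_injective_map hg, fun u w h => hE (some u) (some w) h⟩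

/-- Correctness of the reduction from subgraph isomorphism to pivoted
subgraph isomorphism: for directed graphs `G₁`, `G₂` given by irreflexive edge
relations, there is an injective homomorphism `G₁ → G₂` iff there is an injective
homomorphism `G₁' → G₂'` of the adjoined graphs mapping the new vertex `v₁` (= `none`)
to the new vertex `v₂` (= `none`). -/
theorem reduction_correct {V₁ V₂ : Type*} (E₁ : V₁ → V₁ → Prop) (E₂ : V₂ → V₂ → Prop)
    (h₁ : Irreflexive E₁) (h₂ : Irreflexive E₂) :
    (∃ f : V₁ → V₂, Function.Injective f ∧ ∀ u w, E₁ u w → E₂ (f u) (f w)) ↔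
    (∃ g : Option V₁ → Option V₂, Function.Injective g ∧
      (∀ a b : Option V₁, adjoinVertex E₁ a b → adjoinVertex E₂ (g a) (g b)) ∧
      g none = none) :=
  reduction_correct_general E₁ E₂
end

section
/- Every connected labeled graph of finite size at least 2 is decomposable: it has two distinct elements (vertex labels or labeled edges) such that removing either one, together with any vertex thereby left isolated, yields a connected labeled graph of size one less. -/
/-! Removing a vertex label never disconnects, so two labels already give the pair. Otherwise
take a longest path in the underlying simple graph. At each of its ends `x`, either `x` is a leaf,
or `x` has two incident edges whose other endpoints lie on the path; the rest of the path then
closes a cycle through each of them, so neither is a bridge. Removing a non-bridge, or the edge at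
an unlabelled leaf, keeps the graph connected. Of the two leaves at most one carries the (at most
one) label, and if both leaves hang on the same edge, that edge is the whole graph. -/

namespace SimpleGraph.Walk

variable {V : Type*} {H : SimpleGraph V}

lemma IsPath.mem_support_of_adj_of_forall_length_le {u v w : V} {p : H.Walk u v}
    (hp : p.IsPath) (hmax : ∀ u' v' (p' : H.Walk u' v'), p'.IsPath → p'.length ≤ p.length)
    (h : H.Adj u w) : w ∈ p.support := by
  by_contra hw
  simpa using hmax _ _ _ (hp.cons hw (h := h.symm))

end SimpleGraph.Walk

namespace LabeledGraph

open Relation SimpleGraph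

variable {V SV SE : Type*} (G : LabeledGraph V SV SE)

instance inst_s15 : Std.Symm G.Adj := ⟨fun _ _ ⟨l, h⟩ => ⟨l, h.symm⟩⟩

def toSimpleGraph : SimpleGraph V where
  Adj := G.Adj
  symm := inferInstance
  loopless := ⟨fun _ ⟨_, h⟩ => h.elim (G.no_loops ·) (G.no_loops ·) rfl⟩

lemma finite_edgeSet_toSimpleGraph (hE : G.edges.Finite) : G.toSimpleGraph.edgeSet.Finite := by
  refine (hE.image fun q => s(q.1, q.2.1)).subset ?_
  rintro ⟨x, y⟩ ⟨l, h | h⟩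
  · exact ⟨(x, y, l), h, rfl⟩
  · exact ⟨(y, x, l), h, Sym2.eq_swap⟩

def IsNonBridge (e : V × V × SE) : Prop :=
  ReflTransGen (G.removeElement (.inr e)).Adj e.1 e.2.1

def IsRemovable (e : GraphElement V SV SE) : Prop :=
  G.HasElement e ∧ (G.removeElement e).ConnectedGraph

variable {G}

lemma exists_sym2_eq_of_incident {x : V} {e : V × V × SE} (he : e.1 = x ∨ e.2.1 = x) :
    ∃ w, s(e.1, e.2.1) = s(x, w) := by
  rcases he with rfl | rfl
  · exact ⟨_, rfl⟩
  · exact ⟨_, Sym2.eq_swap⟩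

lemma adj_of_mem_edges {x w : V} {e : V × V × SE} (he : e ∈ G.edges)
    (hew : s(e.1, e.2.1) = s(x, w)) : G.Adj x w := by
  obtain ⟨a, b, l⟩ := e
  rcases Sym2.eq_iff.mp hew with ⟨rfl, rfl⟩ | ⟨rfl, rfl⟩
  · exact ⟨l, .inl he⟩
  · exact ⟨l, .inr he⟩

lemma isNonBridge_iff {x w : V} {e : V × V × SE} (hew : s(e.1, e.2.1) = s(x, w)) :
    G.IsNonBridge e ↔ ReflTransGen (G.removeElement (.inr e)).Adj x w := by
  rcases Sym2.eq_iff.mp hew with ⟨h₁, h₂⟩ | ⟨h₁, h₂⟩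
  · rw [IsNonBridge, h₁, h₂]
  · rw [IsNonBridge, h₁, h₂]
    exact ⟨symm, symm⟩

lemma size_removeElement_add_one (hL : G.labels.Finite) (hE : G.edges.Finite)
    {e : GraphElement V SV SE} (he : G.HasElement e) :
    (G.removeElement e).size + 1 = G.size := by
  cases e with
  | inl p =>
    have := Set.ncard_sdiff_singleton_add_one (show p ∈ G.labels from he) hL
    change (G.labels \ {p}).ncard + G.edges.ncard + 1 = G.labels.ncard + G.edges.ncard
    omega
  | inr q =>
    have := Set.ncard_sdiff_singleton_add_one (show q ∈ G.edges from he) hE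
    change G.labels.ncard + (G.edges \ {q}).ncard + 1 = G.labels.ncard + G.edges.ncard
    omega

lemma isRemovable_inl (hconn : G.ConnectedGraph) {p : V × SV} (hp : p ∈ G.labels) :
    G.IsRemovable (.inl p) :=
  ⟨hp, fun x hx y hy => hconn x hx.1 y hy.1⟩

lemma isRemovable_inr_of_isNonBridge (hconn : G.ConnectedGraph) {e : V × V × SE}
    (he : e ∈ G.edges) (hnb : G.IsNonBridge e) : G.IsRemovable (.inr e) := by
  refine ⟨he, fun x hx y hy => reflTransGen_closed ?_ _ _ (hconn x hx.1 y hy.1)⟩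
  rintro a b ⟨l, h | h⟩
  · by_cases hae : (a, b, l) = e
    · exact hae ▸ hnb
    · exact .single ⟨l, .inl ⟨h, hae⟩⟩
  · by_cases hae : (b, a, l) = e
    · exact symm (hae ▸ hnb)
    · exact .single ⟨l, .inr ⟨h, hae⟩⟩

lemma isRemovable_inr_of_isLeafVertex (hconn : G.ConnectedGraph) {x : V} (hleaf : G.IsLeafVertex x)
    (hx : ∀ l, (x, l) ∉ G.labels) {e : V × V × SE} (he : e ∈ G.edges)
    (hxe : e.1 = x ∨ e.2.1 = x) :
    G.IsRemovable (.inr e) := by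
  have hpend : ∀ f ∈ G.edges, f.1 = x ∨ f.2.1 = x → f = e :=
    fun f hf hfx => hleaf.unique ⟨hf, hfx⟩ ⟨he, hxe⟩
  have hx_isolated : x ∉ (G.removeElement (.inr e)).verts := by
    rintro ⟨-, (⟨l, hl⟩ | ⟨u, l, h | h⟩) | hfree⟩
    · exact hx l hl
    · exact h.2 (hpend _ h.1 (.inl rfl))
    · exact h.2 (hpend _ h.1 (.inr rfl))
    · rcases hxe with rfl | rfl
      · exact hfree (.inr ⟨_, _, .inl he⟩)
      · exact hfree (.inr ⟨_, _, .inr he⟩)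
  obtain ⟨w, hew⟩ := exists_sym2_eq_of_incident hxe
  classical
  -- Collapsing the leaf `x` onto its neighbour `w` turns walks in `G` into walks avoiding `e`.
  let f v := if v = x then w else v
  have hstep : ∀ a b l, (a, b, l) ∈ G.edges →
      ReflTransGen (G.removeElement (.inr e)).Adj (f a) (f b) := by
    intro a b l h
    by_cases hae : (a, b, l) = e
    · have hab : s(a, b) = s(x, w) := by rw [← hew, ← hae]
      rcases Sym2.eq_iff.mp hab with ⟨rfl, rfl⟩ | ⟨rfl, rfl⟩ <;> simp [f, ReflTransGen.refl]
    · have ha : a ≠ x := fun h' => hae (hpend _ h (.inl h'))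
      have hb : b ≠ x := fun h' => hae (hpend _ h (.inr h'))
      simpa [f, ha, hb] using ReflTransGen.single ⟨l, .inl ⟨h, hae⟩⟩
  have hadj : G.Adj ≤ Function.onFun (ReflTransGen (G.removeElement (.inr e)).Adj) f := by
    rintro a b ⟨l, h | h⟩
    · exact hstep a b l h
    · exact symm (hstep b a l h)
  refine ⟨he, fun y hy z hz => ?_⟩
  have hyx : y ≠ x := fun h => hx_isolated (h ▸ hy)
  have hzx : z ≠ x := fun h => hx_isolated (h ▸ hz)
  simpa [Function.onFun, f, hyx, hzx] using ReflTransGen.lift' f hadj y z (hconn y hy.1 z hz.1)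

lemma removeElement_inr_adj {x a b : V} {g : V × V × SE} (hg : g.1 = x ∨ g.2.1 = x)
    (h : G.Adj a b) (ha : a ≠ x) (hb : b ≠ x) : (G.removeElement (.inr g)).Adj a b := by
  obtain ⟨l, h | h⟩ := h
  · refine ⟨l, .inl ⟨h, ?_⟩⟩
    rintro rfl
    exact hg.elim ha hb
  · refine ⟨l, .inr ⟨h, ?_⟩⟩
    rintro rfl
    exact hg.elim hb ha

lemma reflTransGen_removeElement_of_walk {x : V} {g : V × V × SE} (hg : g.1 = x ∨ g.2.1 = x)
    {a b : V} (q : G.toSimpleGraph.Walk a b) (hq : x ∉ q.support) :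
    ∀ w ∈ q.support, ReflTransGen (G.removeElement (.inr g)).Adj a w := by
  induction q with
  | nil => simp [ReflTransGen.refl]
  | @cons a c b h r ih =>
    simp only [Walk.support_cons, List.mem_cons, not_or] at hq ⊢
    rintro w (rfl | hw)
    · exact .refl
    · refine .head (removeElement_inr_adj hg h (Ne.symm hq.1) ?_) (ih hq.2 w hw)
      exact fun hc => hq.2 (hc ▸ r.start_mem_support)

section LongestPath

variable {x y : V} {p : G.toSimpleGraph.Walk x y}

/- Every neighbour of `x` lies on the longest path `p`, and the rest of `p` joins them while
avoiding `x`; so a second edge at `x` closes a cycle through `g`. -/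
lemma isNonBridge_of_incident_start (hp : p.IsPath)
    (hmax : ∀ u v (q : G.toSimpleGraph.Walk u v), q.IsPath → q.length ≤ p.length)
    {f g : V × V × SE} (hf : f ∈ G.edges) (hfg : f ≠ g)
    (hfx : f.1 = x ∨ f.2.1 = x) (hg : g ∈ G.edges) (hgx : g.1 = x ∨ g.2.1 = x) :
    G.IsNonBridge g := by
  obtain ⟨wf, hwf⟩ := exists_sym2_eq_of_incident hfx
  obtain ⟨wg, hwg⟩ := exists_sym2_eq_of_incident hgx
  have hadjf : G.toSimpleGraph.Adj x wf := adj_of_mem_edges hf hwf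
  have hadjg : G.toSimpleGraph.Adj x wg := adj_of_mem_edges hg hwg
  have hmemf := hp.mem_support_of_adj_of_forall_length_le hmax hadjf
  have hmemg := hp.mem_support_of_adj_of_forall_length_le hmax hadjg
  rw [isNonBridge_iff hwg]
  cases p with
  | nil => exact absurd (by simpa using hmemf) hadjf.ne'
  | cons h q =>
    have hxq := ((Walk.cons_isPath_iff h q).mp hp).2
    rw [Walk.support_cons, List.mem_cons] at hmemf hmemg
    have hq := reflTransGen_removeElement_of_walk hgx q hxq
    exact .head (adj_of_mem_edges (G := G.removeElement (.inr g)) ⟨hf, hfg⟩ hwf)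
      ((symm (hq wf (hmemf.resolve_left hadjf.ne'))).trans (hq wg (hmemg.resolve_left hadjg.ne')))

lemma isLeafVertex_or_exists_isNonBridge_pair_of_start (hp : p.IsPath)
    (hmax : ∀ u v (q : G.toSimpleGraph.Walk u v), q.IsPath → q.length ≤ p.length)
    (hxy : x ≠ y) :
    G.IsLeafVertex x ∨ ∃ f g, f ≠ g ∧ f ∈ G.edges ∧ g ∈ G.edges ∧
      G.IsNonBridge f ∧ G.IsNonBridge g := by
  obtain ⟨e, he, hex⟩ : ∃ e ∈ G.edges, e.1 = x ∨ e.2.1 = x := by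
    obtain ⟨l, h | h⟩ := p.adj_snd (hp.nil_iff_eq.not.mpr hxy)
    exacts [⟨_, h, .inl rfl⟩, ⟨_, h, .inr rfl⟩]
  by_cases hleaf : ∀ f ∈ G.edges, f.1 = x ∨ f.2.1 = x → f = e
  · exact .inl ⟨e, ⟨he, hex⟩, fun f hf => hleaf f hf.1 hf.2⟩
  push Not at hleaf
  obtain ⟨f, hf, hfx, hfe⟩ := hleaf
  exact .inr ⟨f, e, hfe, hf, he, isNonBridge_of_incident_start hp hmax he hfe.symm hex hf hfx,
    isNonBridge_of_incident_start hp hmax hf hfe hfx he hex⟩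

end LongestPath

lemma exists_isNonBridge_pair_or_isLeafVertex_pair (hE : G.edges.Finite)
    (hne : G.edges.Nonempty) :
    (∃ f g, f ≠ g ∧ f ∈ G.edges ∧ g ∈ G.edges ∧
      G.IsNonBridge f ∧ G.IsNonBridge g) ∨
      ∃ x y, x ≠ y ∧ G.IsLeafVertex x ∧ G.IsLeafVertex y := by
  obtain ⟨e, he⟩ := hne
  have : Nonempty V := ⟨e.1⟩
  have : Finite G.toSimpleGraph.edgeSet := (G.finite_edgeSet_toSimpleGraph hE).to_subtype
  obtain ⟨x, y, p, hp, hmax⟩ :=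
    Walk.exists_isPath_forall_isPath_length_le_length G.toSimpleGraph
  have hxy : x ≠ y := by
    have hadj : G.toSimpleGraph.Adj e.1 e.2.1 := ⟨e.2.2, .inl he⟩
    have := hmax _ _ hadj.toWalk (.of_adj hadj)
    simp only [Adj.length_toWalk] at this
    exact hp.nil_iff_eq.not.mp (Walk.not_nil_iff_lt_length.mpr this)
  have hmax' : ∀ u v (q : G.toSimpleGraph.Walk u v), q.IsPath →
      q.length ≤ p.reverse.length := by
    simpa using hmax
  rcases isLeafVertex_or_exists_isNonBridge_pair_of_start hp hmax hxy with hx | hnb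
  · rcases isLeafVertex_or_exists_isNonBridge_pair_of_start hp.reverse hmax' hxy.symm
      with hy | hnb
    · exact .inr ⟨x, y, hxy, hx, hy⟩
    · exact .inl hnb
  · exact .inl hnb

lemma edges_subset_singleton_of_isLeafVertex (hconn : G.ConnectedGraph) {x y : V} (hxy : x ≠ y)
    (hxl : G.IsLeafVertex x) (hyl : G.IsLeafVertex y) {e : V × V × SE} (he : e ∈ G.edges)
    (hex : e.1 = x ∨ e.2.1 = x) (hey : e.1 = y ∨ e.2.1 = y) : G.edges ⊆ {e} := by
  have hends : s(e.1, e.2.1) = s(x, y) := by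
    rcases hex with h | h <;> rcases hey with h' | h'
    · exact absurd (h.symm.trans h') hxy
    · rw [h, h']
    · rw [h, h', Sym2.eq_swap]
    · exact absurd (h.symm.trans h') hxy
  have hleaf : ∀ f ∈ G.edges, ∀ v, (f.1 = v ∨ f.2.1 = v) → v = x ∨ v = y → f = e := by
    rintro f hf v hv (rfl | rfl)
    exacts [hxl.unique ⟨hf, hv⟩ ⟨he, hex⟩, hyl.unique ⟨hf, hv⟩ ⟨he, hey⟩]
  have hxV : x ∈ G.verts := by
    rcases hex with h | h
    exacts [h ▸ (G.edges_sub he).1, h ▸ (G.edges_sub he).2]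
  -- The only edge at either leaf joins the two leaves, so no walk from `x` leaves `{x, y}`.
  have htrap : ∀ v, ReflTransGen G.Adj x v → v = x ∨ v = y := by
    intro v hv
    induction hv with
    | refl => exact .inl rfl
    | @tail b c _ hbc ih =>
      obtain ⟨l, h | h⟩ := hbc
      · have hbc : s(b, c) = s(x, y) := by rw [← hends, ← hleaf _ h b (.inl rfl) ih]
        exact Sym2.mem_iff.mp (hbc ▸ Sym2.mem_mk_right b c)
      · have hcb : s(c, b) = s(x, y) := by rw [← hends, ← hleaf _ h b (.inr rfl) ih]
        exact Sym2.mem_iff.mp (hcb ▸ Sym2.mem_mk_left c b)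
  intro f hf
  exact hleaf f hf f.1 (.inl rfl) (htrap _ (hconn x hxV _ (G.edges_sub hf).1))

lemma exists_isRemovable_pair (hL : G.labels.Finite) (hE : G.edges.Finite) (hsize : 2 ≤ G.size)
    (hconn : G.ConnectedGraph) :
    ∃ e₁ e₂, e₁ ≠ e₂ ∧ G.IsRemovable e₁ ∧ G.IsRemovable e₂ := by
  by_cases h2L : 1 < G.labels.ncard
  · obtain ⟨p, q, hp, hq, hpq⟩ := (Set.one_lt_ncard_iff hL).mp h2L
    exact ⟨.inl p, .inl q, by simpa, isRemovable_inl hconn hp, isRemovable_inl hconn hq⟩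
  have hne : G.edges.Nonempty := Set.nonempty_of_ncard_ne_zero (by unfold size at hsize; omega)
  obtain ⟨f, g, hfg, hf, hg, hnbf, hnbg⟩ | ⟨x, y, hxy, hx, hy⟩ :=
    exists_isNonBridge_pair_or_isLeafVertex_pair hE hne
  · exact ⟨.inr f, .inr g, by simpa, isRemovable_inr_of_isNonBridge hconn hf hnbf,
      isRemovable_inr_of_isNonBridge hconn hg hnbg⟩
  obtain ⟨ex, hex, hxex⟩ := hx.exists
  obtain ⟨ey, hey, hyey⟩ := hy.exists
  rcases G.labels.eq_empty_or_nonempty with hL0 | ⟨p, hp⟩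
  · have hexy : ex ≠ ey := by
      rintro rfl
      have := Set.ncard_le_ncard
        (edges_subset_singleton_of_isLeafVertex hconn hxy hx hy hex hxex hyey)
      rw [Set.ncard_singleton] at this
      simp only [size, hL0, Set.ncard_empty] at hsize
      omega
    exact ⟨.inr ex, .inr ey, by simpa,
      isRemovable_inr_of_isLeafVertex hconn hx (by simp [hL0]) hex hxex,
      isRemovable_inr_of_isLeafVertex hconn hy (by simp [hL0]) hey hyey⟩
  have hp_eq : ∀ q ∈ G.labels, q = p :=
    fun q hq => (Set.ncard_le_one hL).mp (not_lt.mp h2L) q hq p hp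
  obtain ⟨z, hz, hzl, ez, hez, hzez⟩ : ∃ z, G.IsLeafVertex z ∧
      (∀ l, (z, l) ∉ G.labels) ∧ ∃ ez ∈ G.edges, ez.1 = z ∨ ez.2.1 = z := by
    by_cases hpx : p.1 = x
    · exact ⟨y, hy, fun l hl => hxy (hpx.symm.trans (congrArg Prod.fst (hp_eq _ hl)).symm),
        ey, hey, hyey⟩
    · exact ⟨x, hx, fun l hl => hpx (congrArg Prod.fst (hp_eq _ hl)).symm, ex, hex, hxex⟩
  exact ⟨.inl p, .inr ez, by simp, isRemovable_inl hconn hp,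
    isRemovable_inr_of_isLeafVertex hconn hz hzl hez hzez⟩

end LabeledGraph

/-- Every connected labeled graph of finite size at least 2 is
decomposable: it has two distinct elements (vertex labels or labeled edges) such that
removing either one, together with any vertex thereby left isolated, yields a connected
labeled graph of size one less. -/
theorem connected_labeledGraph_decomposable {V SV SE : Type*}
    (G : LabeledGraph V SV SE)
    (hL : G.labels.Finite) (hE : G.edges.Finite)
    (hsize : 2 ≤ G.size) (hconn : G.ConnectedGraph) :
    ∃ e₁ e₂ : GraphElement V SV SE, e₁ ≠ e₂ ∧
      G.HasElement e₁ ∧ G.HasElement e₂ ∧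
      ((G.removeElement e₁).ConnectedGraph ∧ (G.removeElement e₁).size + 1 = G.size) ∧
      ((G.removeElement e₂).ConnectedGraph ∧ (G.removeElement e₂).size + 1 = G.size) := by
  obtain ⟨e₁, e₂, hne, ⟨he₁, hconn₁⟩, ⟨he₂, hconn₂⟩⟩ :=
    LabeledGraph.exists_isRemovable_pair hL hE hsize hconn
  exact ⟨e₁, e₂, hne, he₁, he₂,
    ⟨hconn₁, LabeledGraph.size_removeElement_add_one hL hE he₁⟩,
    ⟨hconn₂, LabeledGraph.size_removeElement_add_one hL hE he₂⟩⟩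
end
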